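/- arXiv:1610.05542 — 2 statements merged into one kernel-verified Lean document; each statement's English description precedes it below -/
import Mathlib

section
/- Let ε > 0, let B : [−ε, 0) → ℝ be continuous with sup_{x ∈ [−ε,0)} |B(x) + l/x| < ∞, and let g : [−ε, 0) → ℂ be continuous with |g(x)| ≤ C₀ (−x)^{1/2} for some C₀ > 0. If u : [−ε, 0) → ℂ is continuously differentiable, satisfies u'(x) − m B(x) u(x) = g(x) for all x ∈ [−ε, 0), and moreover |u(x)| ≤ C₀ (−x)^{1/2} on [−ε, 0), then there exists C₁ > 0 such that |u(x)| ≤ C₁ (−x)^{3/2} for all x ∈ [−ε, 0). -/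
/-!
Since `l / x < 0`, the bound on `B + l / x` gives `B ≥ -C_B`, so the integrating factor
`exp (-∫ m B)` grows by at most `K = exp (m C_B ε)` over any subinterval. Variation of constants
on `[x, y] ⊆ [-ε, 0)` then gives
`|u x| ≤ K (|u y| + (y - x) sup |g|) ≤ K C₀ ((-y)^{1/2} + (-x)^{3/2})`,
and letting `y → 0⁻` removes the first term.
-/

open Set Filter Topology

theorem ContinuousOn.hasDerivWithinAt_integral_Icc {E : Type*} [NormedAddCommGroup E]
    [NormedSpace ℝ E] [CompleteSpace E] {f : ℝ → E} {a b t : ℝ}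
    (hf : ContinuousOn f (Icc a b)) (ht : t ∈ Icc a b) :
    HasDerivWithinAt (fun s => ∫ r in a..s, f r) (f t) (Icc a b) t := by
  have : Fact (t ∈ Icc a b) := ⟨ht⟩
  exact intervalIntegral.integral_hasDerivWithinAt_right
    ((hf.mono (Icc_subset_Icc_right ht.2)).intervalIntegrable_of_Icc ht.1)
    (hf.stronglyMeasurableAtFilter_nhdsWithin measurableSet_Icc t) (hf t ht)

theorem norm_le_of_hasDerivWithinAt_add_smul {E : Type*} [NormedAddCommGroup E]
    [NormedSpace ℝ E] {u g : ℝ → E} {b φ : ℝ → ℝ} {x y M : ℝ} (hxy : x ≤ y)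
    (hφ : ∀ t ∈ Icc x y, HasDerivWithinAt φ (b t) (Icc x y) t)
    (hu : ∀ t ∈ Icc x y, HasDerivWithinAt u (g t + b t • u t) (Icc x y) t)
    (hM : ∀ t ∈ Ico x y, Real.exp (φ x - φ t) * ‖g t‖ ≤ M) :
    ‖u x‖ ≤ Real.exp (φ x - φ y) * ‖u y‖ + M * (y - x) := by
  set w : ℝ → E := fun t => Real.exp (-φ t) • u t
  have hw : ∀ t ∈ Icc x y, HasDerivWithinAt w (Real.exp (-φ t) • g t) (Icc x y) t := by
    intro t ht
    convert ((hφ t ht).neg.exp).smul (hu t ht) using 1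
    · rfl
    · simp only [Pi.neg_apply, smul_add, smul_smul]
      module
  have hw_bound : ∀ t ∈ Ico x y, ‖Real.exp (-φ t) • g t‖ ≤ Real.exp (-φ x) * M := by
    intro t ht
    rw [norm_smul, Real.norm_of_nonneg (Real.exp_pos _).le]
    calc Real.exp (-φ t) * ‖g t‖ = Real.exp (-φ x) * (Real.exp (φ x - φ t) * ‖g t‖) := by
          rw [← mul_assoc, ← Real.exp_add]; ring_nf
      _ ≤ Real.exp (-φ x) * M := by gcongr; exact hM t ht
  have hmvt := norm_image_sub_le_of_norm_deriv_le_segment' hw hw_bound y (right_mem_Icc.2 hxy)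
  have hux : u x = Real.exp (φ x) • (w y - (w y - w x)) := by
    simp only [w, sub_sub_cancel, smul_smul, ← Real.exp_add, add_neg_cancel, Real.exp_zero,
      one_smul]
  calc ‖u x‖ ≤ Real.exp (φ x) * (‖w y‖ + ‖w y - w x‖) := by
        rw [hux, norm_smul, Real.norm_of_nonneg (Real.exp_pos _).le]
        gcongr
        exact norm_sub_le _ _
    _ ≤ Real.exp (φ x) * (Real.exp (-φ y) * ‖u y‖ + Real.exp (-φ x) * M * (y - x)) := by
        rw [norm_smul, Real.norm_of_nonneg (Real.exp_pos _).le]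
        gcongr
    _ = Real.exp (φ x - φ y) * ‖u y‖ + M * (y - x) := by
        have h := Real.exp_add (φ x) (-φ x)
        rw [add_neg_cancel, Real.exp_zero] at h
        rw [sub_eq_add_neg (φ x), Real.exp_add]
        linear_combination (M * (y - x)) * h.symm

theorem norm_le_exp_mul_of_hasDerivWithinAt_add_smul {E : Type*} [NormedAddCommGroup E]
    [NormedSpace ℝ E] {u g : ℝ → E} {b : ℝ → ℝ} {x y D G : ℝ} (hxy : x ≤ y) (hD : 0 ≤ D)
    (hb : ContinuousOn b (Icc x y)) (hbD : ∀ t ∈ Icc x y, -D ≤ b t)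
    (hu : ∀ t ∈ Icc x y, HasDerivWithinAt u (g t + b t • u t) (Icc x y) t)
    (hg : ∀ t ∈ Ico x y, ‖g t‖ ≤ G) :
    ‖u x‖ ≤ Real.exp (D * (y - x)) * (‖u y‖ + G * (y - x)) := by
  set φ : ℝ → ℝ := fun t => ∫ s in x..t, b s
  have hφ_le : ∀ t ∈ Icc x y, φ x - φ t ≤ D * (y - x) := by
    intro t ht
    have hbt : ∫ _ in x..t, -D ≤ φ t :=
      intervalIntegral.integral_mono_on ht.1 intervalIntegrable_const
        ((hb.mono (Icc_subset_Icc_right ht.2)).intervalIntegrable_of_Icc ht.1)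
        fun s hs => hbD s ⟨hs.1, hs.2.trans ht.2⟩
    simp only [φ, intervalIntegral.integral_same, intervalIntegral.integral_const,
      smul_eq_mul] at hbt ⊢
    nlinarith [ht.2]
  have key := norm_le_of_hasDerivWithinAt_add_smul hxy
    (fun t ht => hb.hasDerivWithinAt_integral_Icc ht) hu
    (M := Real.exp (D * (y - x)) * G) fun t ht =>
      mul_le_mul (Real.exp_le_exp.2 (hφ_le t (Ico_subset_Icc_self ht))) (hg t ht)
        (norm_nonneg _) (Real.exp_pos _).le
  calc ‖u x‖ ≤ Real.exp (φ x - φ y) * ‖u y‖ + Real.exp (D * (y - x)) * G * (y - x) := key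
    _ ≤ Real.exp (D * (y - x)) * ‖u y‖ + Real.exp (D * (y - x)) * G * (y - x) := by
        gcongr; exact hφ_le y (right_mem_Icc.2 hxy)
    _ = Real.exp (D * (y - x)) * (‖u y‖ + G * (y - x)) := by ring

theorem le_of_forall_le_mul_neg_rpow_add {a c L p x : ℝ} (hx : x < 0) (hp : 0 < p)
    (h : ∀ y ∈ Ioo x 0, a ≤ c * (-y) ^ p + L) : a ≤ L := by
  have hcont : ContinuousAt (fun y : ℝ => c * (-y) ^ p + L) 0 := by
    fun_prop (disch := exact Or.inr hp.le)
  have hlim : Tendsto (fun y : ℝ => c * (-y) ^ p + L) (𝓝[<] 0) (𝓝 L) := by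
    simpa [Real.zero_rpow hp.ne'] using hcont.tendsto.mono_left nhdsWithin_le_nhds
  exact ge_of_tendsto hlim (mem_of_superset (Ioo_mem_nhdsLT hx) h)

theorem neg_le_of_abs_add_div_le {b l t C : ℝ} (hl : 0 ≤ l) (ht : t ≤ 0)
    (h : |b + l / t| ≤ C) : -C ≤ b := by
  linarith [(abs_le.1 h).1, div_nonpos_of_nonneg_of_nonpos hl ht]

theorem stmt_6_general (m l : ℝ) (hm : 0 < m) (hl : 0 < l)
    (ε : ℝ)
    (B : ℝ → ℝ) (hBcont : ContinuousOn B (Set.Ico (-ε) 0))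
    (CB : ℝ) (hCB : ∀ x ∈ Set.Ico (-ε) (0:ℝ), |B x + l/x| ≤ CB)
    (g : ℝ → ℂ)
    (C₀ : ℝ) (hC₀ : 0 < C₀)
    (hgb : ∀ x ∈ Set.Ico (-ε) (0:ℝ), ‖g x‖ ≤ C₀ * (-x) ^ ((1:ℝ)/2))
    (u : ℝ → ℂ)
    (hu : ∀ x ∈ Set.Ico (-ε) (0:ℝ),
      HasDerivWithinAt u (g x + ((m * B x : ℝ) : ℂ) * u x) (Set.Ico (-ε) 0) x)
    (hub : ∀ x ∈ Set.Ico (-ε) (0:ℝ), ‖u x‖ ≤ C₀ * (-x) ^ ((1:ℝ)/2)) :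
    ∃ C₁ > 0, ∀ x ∈ Set.Ico (-ε) (0:ℝ),
      ‖u x‖ ≤ C₁ * (-x) ^ ((3:ℝ)/2) := by
  set K := Real.exp (m * CB * ε)
  refine ⟨K * C₀, by positivity, fun x hx => ?_⟩
  have hCB0 : 0 ≤ CB := (abs_nonneg _).trans (hCB x hx)
  have hpow : (-x) ^ ((1:ℝ)/2) * (-x) = (-x) ^ ((3:ℝ)/2) := by
    rw [← Real.rpow_add_one (by linarith [hx.2])]; norm_num
  refine le_of_forall_le_mul_neg_rpow_add (c := K * C₀) hx.2 (by norm_num : (0:ℝ) < 1/2)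
    fun y hy => ?_
  have hsub : Icc x y ⊆ Ico (-ε) 0 := fun t ht => ⟨hx.1.trans ht.1, ht.2.trans_lt hy.2⟩
  have hest := norm_le_exp_mul_of_hasDerivWithinAt_add_smul hy.1.le
    (b := fun t => m * B t) (D := m * CB) (G := C₀ * (-x) ^ ((1:ℝ)/2)) (by positivity)
    ((continuousOn_const.mul hBcont).mono hsub)
    (fun t ht => by nlinarith [neg_le_of_abs_add_div_le hl.le (hsub ht).2.le (hCB t (hsub ht))])
    (fun t ht => by simpa only [Complex.real_smul] using (hu t (hsub ht)).mono hsub)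
    (fun t ht => (hgb t (hsub (Ico_subset_Icc_self ht))).trans (by
      gcongr
      · linarith [ht.2, hy.2]
      · linarith [ht.1]))
  calc ‖u x‖ ≤ Real.exp (m * CB * (y - x)) * (‖u y‖ + C₀ * (-x) ^ ((1:ℝ)/2) * (y - x)) := hest
    _ ≤ K * (C₀ * (-y) ^ ((1:ℝ)/2) + C₀ * (-x) ^ ((1:ℝ)/2) * (-x)) := by
        have hK : Real.exp (m * CB * (y - x)) ≤ K :=
          Real.exp_le_exp.2 (by gcongr; linarith [hx.1, hy.2])
        have hG : 0 ≤ C₀ * (-x) ^ ((1:ℝ)/2) :=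
          mul_nonneg hC₀.le (Real.rpow_nonneg (by linarith [hx.2]) _)
        gcongr
        · exact add_nonneg (norm_nonneg _) (mul_nonneg hG (by linarith [hy.1]))
        · exact hub y (hsub (right_mem_Icc.2 hy.1.le))
        · linarith [hy.2]
    _ = K * C₀ * (-y) ^ ((1:ℝ)/2) + K * C₀ * (-x) ^ ((3:ℝ)/2) := by rw [← hpow]; ring

/-- If `B` is continuous on `[−ε,0)` with `|B(x) + l/x|` bounded,
`|g(x)| ≤ C₀(−x)^{1/2}`, `u' − mBu = g` on `[−ε,0)` and moreover
`|u(x)| ≤ C₀(−x)^{1/2}`, then `|u(x)| ≤ C₁ (−x)^{3/2}` on `[−ε,0)`. -/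
theorem stmt_6 (m l : ℝ) (hm : 0 < m) (hl : 0 < l)
    (ε : ℝ) (hε : 0 < ε)
    (B : ℝ → ℝ) (hBcont : ContinuousOn B (Set.Ico (-ε) 0))
    (CB : ℝ) (hCB : ∀ x ∈ Set.Ico (-ε) (0:ℝ), |B x + l/x| ≤ CB)
    (g : ℝ → ℂ) (hgcont : ContinuousOn g (Set.Ico (-ε) 0))
    (C₀ : ℝ) (hC₀ : 0 < C₀)
    (hgb : ∀ x ∈ Set.Ico (-ε) (0:ℝ), ‖g x‖ ≤ C₀ * (-x) ^ ((1:ℝ)/2))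
    (u : ℝ → ℂ)
    (hu : ∀ x ∈ Set.Ico (-ε) (0:ℝ),
      HasDerivWithinAt u (g x + ((m * B x : ℝ) : ℂ) * u x) (Set.Ico (-ε) 0) x)
    (hub : ∀ x ∈ Set.Ico (-ε) (0:ℝ), ‖u x‖ ≤ C₀ * (-x) ^ ((1:ℝ)/2)) :
    ∃ C₁ > 0, ∀ x ∈ Set.Ico (-ε) (0:ℝ),
      ‖u x‖ ≤ C₁ * (-x) ^ ((3:ℝ)/2) :=
  stmt_6_general m l hm hl ε B hBcont CB hCB g C₀ hC₀ hgb u hu hub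
end

section
/- Let m > 0, h > 0, x₊ < 0, let ϕ : (x₊, 0) → ℝ be smooth, E ∈ ℝ, and f ∈ C_c^∞((x₊, 0), ℂ⁴). Then Re ∫_{x₊}^0 ⟨ e^{ϕ(x)/h} [ −h² (e^{−ϕ/h} f)''(x) + V(x) e^{−ϕ(x)/h} f(x) − E e^{−ϕ(x)/h} f(x) ], f(x) ⟩ dx = ∫_{x₊}^0 [ ⟨−h² f''(x), f(x)⟩ + ( A(x)² + h² m² B(x)² − ϕ'(x)² − E ) ‖f(x)‖² + h² m B'(x) Re⟨i γ¹ f(x), f(x)⟩ ] dx − 2h ∫_{x₊}^0 A'(x) Im( f₂(x) \overline{f₁(x)} + f₄(x) \overline{f₃(x)} ) dx, the left-hand integrand being understood componentwise with f = (f₁, f₂, f₃, f₄). -/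
open MeasureTheory Set Matrix

/-- The metric coefficient `F(r) = 1 - 2M/r + r²/l²`. -/
noncomputable def F (M l r : ℝ) : ℝ := 1 - 2*M/r + r^2/l^2

/-- The potential `A(x) = F(r(x))^{1/2}/r(x)`. -/
noncomputable def A (M l : ℝ) (rfun : ℝ → ℝ) (x : ℝ) : ℝ :=
  Real.sqrt (F M l (rfun x)) / rfun x

/-- The potential `B(x) = F(r(x))^{1/2}`. -/
noncomputable def B (M l : ℝ) (rfun : ℝ → ℝ) (x : ℝ) : ℝ :=
  Real.sqrt (F M l (rfun x))

/-- The Dirac matrix `γ¹`. -/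
noncomputable def γ1 : Matrix (Fin 4) (Fin 4) ℂ :=
  !![0, 0, Complex.I, 0;
     0, 0, 0, -Complex.I;
     Complex.I, 0, 0, 0;
     0, -Complex.I, 0, 0]

/-- The matrix `γ¹γ²`. -/
noncomputable def γ12 : Matrix (Fin 4) (Fin 4) ℂ :=
  !![0, -1, 0, 0;
     1, 0, 0, 0;
     0, 0, 0, -1;
     0, 0, 1, 0]

/-- The matrix potential
`V(x) = (A² + h²m²B²) I − ih A' γ¹γ² + ih² m B' γ¹`. -/
noncomputable def Vpot (M l : ℝ) (rfun : ℝ → ℝ) (m h x : ℝ) :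
    Matrix (Fin 4) (Fin 4) ℂ :=
  (((A M l rfun x)^2 + h^2 * m^2 * (B M l rfun x)^2 : ℝ) : ℂ) • 1
    - (Complex.I * ((h * deriv (A M l rfun) x : ℝ) : ℂ)) • γ12
    + (Complex.I * ((h^2 * m * deriv (B M l rfun) x : ℝ) : ℂ)) • γ1

/-- The standard Hermitian inner product `⟨u,v⟩ = ∑ uⱼ v̄ⱼ` on `ℂ⁴`. -/
noncomputable def hermInner (u v : Fin 4 → ℂ) : ℂ :=
  ∑ j, u j * (starRingEnd ℂ) (v j)

/-- The squared Hermitian norm `‖u‖² = ∑ |uⱼ|²` on `ℂ⁴`. -/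
noncomputable def nsq (u : Fin 4 → ℂ) : ℝ :=
  ∑ j, Complex.normSq (u j)

lemma hermInner_smul_left (a : ℂ) (u v : Fin 4 → ℂ) :
    hermInner (a • u) v = a * hermInner u v := by
  simp [hermInner, Finset.mul_sum, mul_assoc]

lemma hermInner_add_left (u w v : Fin 4 → ℂ) :
    hermInner (u + w) v = hermInner u v + hermInner w v := by
  simp [hermInner, add_mul, Finset.sum_add_distrib]

lemma hermInner_sub_left (u w v : Fin 4 → ℂ) :
    hermInner (u - w) v = hermInner u v - hermInner w v := by
  simp [hermInner, sub_mul, Finset.sum_sub_distrib]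

lemma hermInner_zero_right (u : Fin 4 → ℂ) : hermInner u 0 = 0 := by
  simp [hermInner]

lemma hermInner_self (v : Fin 4 → ℂ) : hermInner v v = (nsq v : ℂ) := by
  simp [hermInner, nsq, Complex.mul_conj]

lemma continuous_glue {E : Type*} [NormedAddCommGroup E] {w : ℝ → E} {s K : Set ℝ}
    (hs : IsOpen s) (hKc : IsClosed K) (hK : K ⊆ s)
    (hw : ContinuousOn w s) (h0 : ∀ x, x ∉ K → w x = 0) : Continuous w := by
  rw [continuous_iff_continuousAt]
  intro x
  by_cases hx : x ∈ s
  · exact hw.continuousAt (hs.mem_nhds hx)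
  · have hx' : x ∉ K := fun hxK => hx (hK hxK)
    have hev : w =ᶠ[nhds x] (fun _ => 0) :=
      Filter.eventuallyEq_of_mem (hKc.isOpen_compl.mem_nhds hx') (fun y hy => h0 y hy)
    exact ContinuousAt.congr continuousAt_const hev.symm

lemma continuousOn_hermInner {w1 w2 : ℝ → Fin 4 → ℂ} {s : Set ℝ}
    (h1 : ContinuousOn w1 s) (h2 : ContinuousOn w2 s) :
    ContinuousOn (fun x => hermInner (w1 x) (w2 x)) s := by
  unfold hermInner
  apply continuousOn_finset_sum
  intro j _
  exact ((continuous_apply j).comp_continuousOn h1).mul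
    (Complex.continuous_conj.comp_continuousOn ((continuous_apply j).comp_continuousOn h2))

lemma continuous_hermInner {w1 w2 : ℝ → Fin 4 → ℂ}
    (h1 : Continuous w1) (h2 : Continuous w2) :
    Continuous (fun x => hermInner (w1 x) (w2 x)) := by
  unfold hermInner
  apply continuous_finset_sum
  intro j _
  exact ((continuous_apply j).comp h1).mul
    (Complex.continuous_conj.comp ((continuous_apply j).comp h2))

lemma integrable_glue {E : Type*} [NormedAddCommGroup E] {w : ℝ → E} {s K : Set ℝ}
    (hs : IsOpen s) (hKc : IsCompact K) (hKcl : IsClosed K) (hK : K ⊆ s)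
    (hw : ContinuousOn w s) (h0 : ∀ x, x ∉ K → w x = 0) :
    MeasureTheory.Integrable w := by
  exact (continuous_glue hs hKcl hK hw h0).integrable_of_hasCompactSupport
    (HasCompactSupport.intro hKc h0)

lemma gamma1_mulVec (v : Fin 4 → ℂ) :
    γ1 *ᵥ v = ![Complex.I * v 2, -(Complex.I * v 3), Complex.I * v 0, -(Complex.I * v 1)] := by
  funext j; fin_cases j <;>
    simp [γ1, Matrix.mulVec, dotProduct, Fin.sum_univ_four]

lemma gamma12_mulVec (v : Fin 4 → ℂ) :
    γ12 *ᵥ v = ![-v 1, v 0, -v 3, v 2] := by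
  funext j; fin_cases j <;>
    simp [γ12, Matrix.mulVec, dotProduct, Fin.sum_univ_four]

lemma Vpot_mulVec (M l : ℝ) (rfun : ℝ → ℝ) (m h x : ℝ) (v : Fin 4 → ℂ) :
    Vpot M l rfun m h x *ᵥ v
      = (((A M l rfun x)^2 + h^2 * m^2 * (B M l rfun x)^2 : ℝ) : ℂ) • v
        - (Complex.I * ((h * deriv (A M l rfun) x : ℝ) : ℂ)) • (γ12 *ᵥ v)
        + (Complex.I * ((h^2 * m * deriv (B M l rfun) x : ℝ) : ℂ)) • (γ1 *ᵥ v) := by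
  simp [Vpot, Matrix.add_mulVec, Matrix.sub_mulVec, Matrix.smul_mulVec,
    Matrix.one_mulVec]

lemma Vherm (M l : ℝ) (rfun : ℝ → ℝ) (m h x : ℝ) (v : Fin 4 → ℂ) :
    (hermInner (Vpot M l rfun m h x *ᵥ v) v).re
      = ((A M l rfun x)^2 + h^2*m^2*(B M l rfun x)^2) * nsq v
        + h^2*m*deriv (B M l rfun) x * (hermInner (Complex.I • (γ1 *ᵥ v)) v).re
        - 2*h*deriv (A M l rfun) x
            * (v 1 * (starRingEnd ℂ) (v 0) + v 3 * (starRingEnd ℂ) (v 2)).im := by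
  rw [Vpot_mulVec, hermInner_add_left, hermInner_sub_left, hermInner_smul_left,
    hermInner_smul_left, hermInner_smul_left, hermInner_self, gamma1_mulVec, gamma12_mulVec]
  simp only [hermInner, Fin.sum_univ_four, Pi.smul_apply, smul_eq_mul, Matrix.cons_val_zero,
    Matrix.cons_val_one, Matrix.head_cons, Matrix.cons_val_two, Matrix.cons_val_three,
    Matrix.tail_cons]
  simp only [Complex.add_re, Complex.add_im, Complex.sub_re, Complex.sub_im,
    Complex.mul_re, Complex.mul_im, Complex.neg_re, Complex.neg_im,
    Complex.I_re, Complex.I_im, Complex.ofReal_re, Complex.ofReal_im,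
    Complex.conj_re, Complex.conj_im]
  ring

/-- The conjugated-operator identity (Agmon identity):
`Re ∫ ⟨e^{ϕ/h}(−h²(e^{−ϕ/h}f)'' + V e^{−ϕ/h}f − E e^{−ϕ/h}f), f⟩`
`= ∫ [⟨−h²f'',f⟩ + (A² + h²m²B² − ϕ'² − E)‖f‖² + h²mB' Re⟨iγ¹f,f⟩]`
`  − 2h ∫ A' Im(f₂ f̄₁ + f₄ f̄₃)`. -/
theorem stmt_13 (M l : ℝ) (hM : 0 < M) (hl : 0 < l)
    (rSAdS : ℝ) (hrS : 0 < rSAdS) (hroot : F M l rSAdS = 0)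
    (hFpos : ∀ r, rSAdS < r → 0 < F M l r)
    (rfun : ℝ → ℝ)
    (hrange : ∀ x, x < 0 → rSAdS < rfun x)
    (hinv1 : ∀ x, x < 0 → -(∫ s in Set.Ioi (rfun x), (F M l s)⁻¹) = x)
    (hinv2 : ∀ r, rSAdS < r → rfun (-(∫ s in Set.Ioi r, (F M l s)⁻¹)) = r)
    (hAsm : ContDiffOn ℝ (⊤ : ℕ∞) (A M l rfun) (Set.Iio 0))
    (hBsm : ContDiffOn ℝ (⊤ : ℕ∞) (B M l rfun) (Set.Iio 0))
    (m h : ℝ) (hm : 0 < m) (hh : 0 < h)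
    (xp : ℝ) (hxp : xp < 0)
    (ϕ : ℝ → ℝ) (hϕ : ContDiffOn ℝ (⊤ : ℕ∞) ϕ (Set.Ioo xp 0))
    (E : ℝ)
    (f : ℝ → Fin 4 → ℂ) (hf : ContDiff ℝ (⊤ : ℕ∞) f)
    (hfc : HasCompactSupport f) (hfs : tsupport f ⊆ Set.Ioo xp 0)
    (g : ℝ → Fin 4 → ℂ)
    (hg : g = fun x => ((Real.exp (-ϕ x / h) : ℝ) : ℂ) • f x) :
    (∫ x in Set.Ioo xp 0,
        hermInner
          (((Real.exp (ϕ x / h) : ℝ) : ℂ) •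
            ((-(h^2 : ℂ)) • deriv (deriv g) x
              + Vpot M l rfun m h x *ᵥ g x - ((E : ℝ) : ℂ) • g x))
          (f x)).re
      = (∫ x in Set.Ioo xp 0,
          hermInner ((-(h^2 : ℂ)) • deriv (deriv f) x) (f x)).re
        + (∫ x in Set.Ioo xp 0,
            (((A M l rfun x)^2 + h^2 * m^2 * (B M l rfun x)^2
                - (deriv ϕ x)^2 - E) * nsq (f x)
              + h^2 * m * deriv (B M l rfun) x *
                  (hermInner (Complex.I • (γ1 *ᵥ f x)) (f x)).re))
        - 2 * h * ∫ x in Set.Ioo xp 0,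
            deriv (A M l rfun) x *
              (f x 1 * (starRingEnd ℂ) (f x 0)
                + f x 3 * (starRingEnd ℂ) (f x 2)).im := by
  subst hg
  beta_reduce
  have hh0 : (h:ℝ) ≠ 0 := ne_of_gt hh
  have hSopen : IsOpen (Set.Ioo xp 0) := isOpen_Ioo
  have hKcl : IsClosed (tsupport f) := isClosed_tsupport f
  have hKS : tsupport f ⊆ Set.Ioo xp 0 := hfs
  have hSIio : Set.Ioo xp 0 ⊆ Set.Iio 0 := fun y hy => hy.2
  have hf0 : ∀ x, x ∉ tsupport f → f x = 0 := fun x hx => image_eq_zero_of_notMem_tsupport hx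
  have hnotS : ∀ x, x ∉ Set.Ioo xp 0 → x ∉ tsupport f := fun x hx hc => hx (hKS hc)
  -- smoothness of f
  have h1inf : (1 : WithTop ℕ∞) ≤ ((⊤:ℕ∞) : WithTop ℕ∞) := by
    exact_mod_cast (le_top : (1:ℕ∞) ≤ ⊤)
  have hfi : ContDiff ℝ (⊤:ℕ∞) f := hf.of_le (by simp)
  have hfd : Differentiable ℝ f := hfi.differentiable (lt_of_lt_of_le zero_lt_one h1inf).ne'
  have hf1i : ContDiff ℝ (⊤:ℕ∞) (deriv f) := (contDiff_infty_iff_deriv.mp hfi).2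
  have hf1d : Differentiable ℝ (deriv f) := hf1i.differentiable (lt_of_lt_of_le zero_lt_one h1inf).ne'
  have hf2c : Continuous (deriv (deriv f)) := ((contDiff_infty_iff_deriv.mp hf1i).2).continuous
  have hfC : Continuous f := hfd.continuous
  have hf1C : Continuous (deriv f) := hf1d.continuous
  -- smoothness of ϕ and its derivatives on S
  have hϕd : DifferentiableOn ℝ ϕ (Set.Ioo xp 0) := hϕ.differentiableOn (by simp)
  have hpdsm : ContDiffOn ℝ (⊤ : ℕ∞) (deriv ϕ) (Set.Ioo xp 0) := hϕ.deriv_of_isOpen hSopen (by simp)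
  have hpd2sm : ContDiffOn ℝ (⊤ : ℕ∞) (deriv (deriv ϕ)) (Set.Ioo xp 0) :=
    hpdsm.deriv_of_isOpen hSopen (by simp)
  have hAd : ContDiffOn ℝ (⊤ : ℕ∞) (deriv (A M l rfun)) (Set.Iio 0) :=
    hAsm.deriv_of_isOpen isOpen_Iio (by simp)
  have hBd : ContDiffOn ℝ (⊤ : ℕ∞) (deriv (B M l rfun)) (Set.Iio 0) :=
    hBsm.deriv_of_isOpen isOpen_Iio (by simp)
  have hAdC : ContinuousOn (deriv (A M l rfun)) (Set.Iio 0) := hAd.continuousOn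
  have hBdC : ContinuousOn (deriv (B M l rfun)) (Set.Iio 0) := hBd.continuousOn
  -- pointwise derivative facts
  have hϕat : ∀ y ∈ Set.Ioo xp 0, HasDerivAt ϕ (deriv ϕ y) y := fun y hy =>
    (hϕd.differentiableAt (hSopen.mem_nhds hy)).hasDerivAt
  have hpdat : ∀ y ∈ Set.Ioo xp 0, HasDerivAt (deriv ϕ) (deriv (deriv ϕ) y) y := fun y hy =>
    ((hpdsm.differentiableOn (by simp)).differentiableAt (hSopen.mem_nhds hy)).hasDerivAt
  have huat : ∀ y ∈ Set.Ioo xp 0, HasDerivAt (fun t => Real.exp (-ϕ t / h))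
      (Real.exp (-ϕ y / h) * (-(deriv ϕ y) / h)) y := by
    intro y hy
    exact ((hϕat y hy).neg.div_const h).exp
  have hcat : ∀ y ∈ Set.Ioo xp 0, HasDerivAt (fun t => ((Real.exp (-ϕ t / h) : ℝ) : ℂ))
      ((Real.exp (-ϕ y / h) * (-(deriv ϕ y) / h) : ℝ) : ℂ) y := fun y hy =>
    (huat y hy).ofReal_comp
  have hfat : ∀ y, HasDerivAt f (deriv f y) y := fun y => (hfd y).hasDerivAt
  have hf1at : ∀ y, HasDerivAt (deriv f) (deriv (deriv f) y) y := fun y => (hf1d y).hasDerivAt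
  have hgat : ∀ y ∈ Set.Ioo xp 0,
      HasDerivAt (fun t => ((Real.exp (-ϕ t / h) : ℝ) : ℂ) • f t)
      (((Real.exp (-ϕ y / h) : ℝ) : ℂ) • deriv f y
        + ((Real.exp (-ϕ y / h) * (-(deriv ϕ y) / h) : ℝ) : ℂ) • f y) y :=
    fun y hy => (hcat y hy).smul (hfat y)
  -- derivative of nsq ∘ f
  have hnsqat : ∀ y, HasDerivAt (fun t => nsq (f t))
      (2 * (hermInner (deriv f y) (f y)).re) y := by
    intro y
    have hcomp : ∀ j : Fin 4, HasDerivAt (fun t => (f t j * (starRingEnd ℂ) (f t j)).re)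
        ((deriv f y j * (starRingEnd ℂ) (f y j)
          + f y j * (starRingEnd ℂ) (deriv f y j)).re) y := by
      intro j
      have hj : HasDerivAt (fun t => f t j) (deriv f y j) y := hasDerivAt_pi.mp (hfat y) j
      have hcj : HasDerivAt (fun t => (starRingEnd ℂ) (f t j))
          ((starRingEnd ℂ) (deriv f y j)) y := by
        simpa only [starRingEnd_apply] using hj.star
      exact Complex.reCLM.hasFDerivAt.comp_hasDerivAt y (hj.mul hcj)
    have heq : (fun t => nsq (f t)) = fun t => ∑ j, (f t j * (starRingEnd ℂ) (f t j)).re := by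
      funext t
      simp [nsq, Complex.mul_conj]
    rw [heq]
    have hsum := HasDerivAt.sum (fun j (_ : j ∈ Finset.univ) => hcomp j)
    refine hsum.congr_deriv ?_
    symm
    unfold hermInner
    rw [Complex.re_sum, Finset.mul_sum]
    refine Finset.sum_congr rfl fun j _ => ?_
    simp only [Complex.add_re, Complex.mul_re, Complex.conj_re, Complex.conj_im]
    ring
  -- the auxiliary function G
  set G : ℝ → ℝ := fun t => deriv ϕ t * nsq (f t) with hGdef
  have hGat : ∀ y ∈ Set.Ioo xp 0, HasDerivAt G
      (deriv (deriv ϕ) y * nsq (f y) + deriv ϕ y * (2 * (hermInner (deriv f y) (f y)).re)) y :=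
    fun y hy => (hpdat y hy).mul (hnsqat y)
  have hGev0 : ∀ y, y ∉ tsupport f → G =ᶠ[nhds y] fun _ => 0 := by
    intro y hy
    filter_upwards [hKcl.isOpen_compl.mem_nhds hy] with z hz
    simp [hGdef, hf0 z hz, nsq]
  have hGd0 : ∀ y, y ∉ tsupport f → deriv G y = 0 := by
    intro y hy
    rw [(hGev0 y hy).deriv_eq]
    exact deriv_const _ _
  have hGdiff : ∀ y, DifferentiableAt ℝ G y := by
    intro y
    by_cases hy : y ∈ Set.Ioo xp 0
    · exact (hGat y hy).differentiableAt
    · exact (differentiableAt_const (0:ℝ)).congr_of_eventuallyEq (hGev0 y (hnotS y hy))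
  -- smoothness of nsq ∘ f and continuity of deriv G
  have hnsqC : Continuous (fun t => nsq (f t)) := by
    unfold nsq
    exact continuous_finset_sum _ fun j _ =>
      Complex.continuous_normSq.comp ((continuous_apply j).comp hfC)
  have hnsqSm : ContDiff ℝ (⊤ : ℕ∞) (fun t => nsq (f t)) := by
    unfold nsq
    apply ContDiff.sum
    intro j _
    have hj : ContDiff ℝ (⊤ : ℕ∞) (fun t => f t j) := (contDiff_pi.mp hf) j
    have hre : ContDiff ℝ (⊤ : ℕ∞) (fun t => (f t j).re) := Complex.reCLM.contDiff.comp hj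
    have him : ContDiff ℝ (⊤ : ℕ∞) (fun t => (f t j).im) := Complex.imCLM.contDiff.comp hj
    have : (fun t => Complex.normSq (f t j))
        = fun t => (f t j).re * (f t j).re + (f t j).im * (f t j).im := by
      funext t; rw [Complex.normSq_apply]
    rw [this]
    exact (hre.mul hre).add (him.mul him)
  have hGsm : ContDiffOn ℝ (⊤ : ℕ∞) G (Set.Ioo xp 0) := hpdsm.mul hnsqSm.contDiffOn
  have hGdC : Continuous (deriv G) :=
    continuous_glue hSopen hKcl hKS
      (hGsm.continuousOn_deriv_of_isOpen hSopen (by simp)) hGd0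
  -- the function Φ
  set Φ : ℝ → ℂ := fun x =>
    ((-(h^2) * ((deriv ϕ x / h)^2 - deriv (deriv ϕ) x / h) : ℝ) : ℂ)
        * hermInner (f x) (f x)
      + ((-(h^2) * (2 * (-(deriv ϕ x) / h)) : ℝ) : ℂ) * hermInner (deriv f x) (f x)
      + (-(h^2 : ℂ)) * hermInner (deriv (deriv f) x) (f x)
      + hermInner (Vpot M l rfun m h x *ᵥ f x) (f x)
      - ((E : ℝ) : ℂ) * hermInner (f x) (f x) with hΦdef
  -- pointwise identity : integrand = Φ
  have hLCΦ : ∀ x, hermInner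
      (((Real.exp (ϕ x / h) : ℝ) : ℂ) •
        ((-(h^2 : ℂ)) • deriv (deriv (fun t => ((Real.exp (-ϕ t / h) : ℝ) : ℂ) • f t)) x
          + Vpot M l rfun m h x *ᵥ (((Real.exp (-ϕ x / h) : ℝ) : ℂ) • f x)
          - ((E : ℝ) : ℂ) • (((Real.exp (-ϕ x / h) : ℝ) : ℂ) • f x)))
      (f x) = Φ x := by
    intro x
    by_cases hx : x ∈ Set.Ioo xp 0
    · -- second derivative of the conjugated function
      have hev : deriv (fun t => ((Real.exp (-ϕ t / h) : ℝ) : ℂ) • f t) =ᶠ[nhds x]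
          (fun y => ((Real.exp (-ϕ y / h) : ℝ) : ℂ) • deriv f y
            + ((Real.exp (-ϕ y / h) * (-(deriv ϕ y) / h) : ℝ) : ℂ) • f y) :=
        Filter.eventuallyEq_of_mem (hSopen.mem_nhds hx) (fun y hy => (hgat y hy).deriv)
      have hm1 : HasDerivAt (fun y => Real.exp (-ϕ y / h) * (-(deriv ϕ y) / h))
          ((Real.exp (-ϕ x / h) * (-(deriv ϕ x) / h)) * (-(deriv ϕ x) / h)
            + Real.exp (-ϕ x / h) * (-(deriv (deriv ϕ) x) / h)) x :=
        (huat x hx).mul ((hpdat x hx).neg.div_const h)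
      have hR : HasDerivAt (fun y => ((Real.exp (-ϕ y / h) : ℝ) : ℂ) • deriv f y
            + ((Real.exp (-ϕ y / h) * (-(deriv ϕ y) / h) : ℝ) : ℂ) • f y)
          (((Real.exp (-ϕ x / h) : ℝ) : ℂ) • deriv (deriv f) x
            + ((Real.exp (-ϕ x / h) * (-(deriv ϕ x) / h) : ℝ) : ℂ) • deriv f x
            + (((Real.exp (-ϕ x / h) * (-(deriv ϕ x) / h) : ℝ) : ℂ) • deriv f x
              + (((Real.exp (-ϕ x / h) * (-(deriv ϕ x) / h)) * (-(deriv ϕ x) / h)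
                  + Real.exp (-ϕ x / h) * (-(deriv (deriv ϕ) x) / h) : ℝ) : ℂ) • f x)) x :=
        ((hcat x hx).smul (hf1at x)).add (hm1.ofReal_comp.smul (hfat x))
      have hdd : deriv (deriv (fun t => ((Real.exp (-ϕ t / h) : ℝ) : ℂ) • f t)) x
          = ((Real.exp (-ϕ x / h) : ℝ) : ℂ) • deriv (deriv f) x
            + ((Real.exp (-ϕ x / h) * (-(deriv ϕ x) / h) : ℝ) : ℂ) • deriv f x
            + (((Real.exp (-ϕ x / h) * (-(deriv ϕ x) / h) : ℝ) : ℂ) • deriv f x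
              + (((Real.exp (-ϕ x / h) * (-(deriv ϕ x) / h)) * (-(deriv ϕ x) / h)
                  + Real.exp (-ϕ x / h) * (-(deriv (deriv ϕ) x) / h) : ℝ) : ℂ) • f x) := by
        rw [hev.deriv_eq]
        exact hR.deriv
      have heu : Real.exp (ϕ x / h) * Real.exp (-ϕ x / h) = 1 := by
        rw [← Real.exp_add, show ϕ x / h + -ϕ x / h = 0 by ring, Real.exp_zero]
      have k0C : ((Real.exp (ϕ x / h) : ℝ) : ℂ) * ((Real.exp (-ϕ x / h) : ℝ) : ℂ) = 1 := by
        exact_mod_cast heu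
      have hVsmul : Vpot M l rfun m h x *ᵥ (((Real.exp (-ϕ x / h) : ℝ) : ℂ) • f x)
          = ((Real.exp (-ϕ x / h) : ℝ) : ℂ) • (Vpot M l rfun m h x *ᵥ f x) :=
        Matrix.mulVec_smul _ _ _
      have keyvec : ((Real.exp (ϕ x / h) : ℝ) : ℂ) •
          ((-(h^2 : ℂ)) • deriv (deriv (fun t => ((Real.exp (-ϕ t / h) : ℝ) : ℂ) • f t)) x
            + Vpot M l rfun m h x *ᵥ (((Real.exp (-ϕ x / h) : ℝ) : ℂ) • f x)
            - ((E : ℝ) : ℂ) • (((Real.exp (-ϕ x / h) : ℝ) : ℂ) • f x))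
          = ((-(h^2) * ((deriv ϕ x / h)^2 - deriv (deriv ϕ) x / h) : ℝ) : ℂ) • f x
            + ((-(h^2) * (2 * (-(deriv ϕ x) / h)) : ℝ) : ℂ) • deriv f x
            + (-(h^2 : ℂ)) • deriv (deriv f) x
            + Vpot M l rfun m h x *ᵥ f x
            - ((E : ℝ) : ℂ) • f x := by
        rw [hdd, hVsmul]
        funext j
        simp only [Pi.add_apply, Pi.sub_apply, Pi.smul_apply, smul_eq_mul]
        push_cast
        have kC : Complex.exp ((ϕ x : ℂ) / (h:ℂ)) * Complex.exp (-(ϕ x : ℂ) / (h:ℂ)) = 1 := by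
          rw [← Complex.exp_add, show ((ϕ x : ℂ) / (h:ℂ) + -(ϕ x : ℂ) / (h:ℂ)) = 0 by ring,
            Complex.exp_zero]
        linear_combination (-((h:ℂ))^2 * (deriv (deriv f) x j
            + 2 * (-((deriv ϕ x : ℝ):ℂ) / (h:ℂ)) * deriv f x j
            + ((((deriv ϕ x : ℝ):ℂ) / (h:ℂ))^2 - ((deriv (deriv ϕ) x : ℝ):ℂ) / (h:ℂ)) * f x j)
          + (Vpot M l rfun m h x *ᵥ f x) j - ((E:ℝ):ℂ) * f x j) * kC
      rw [keyvec, hermInner_sub_left, hermInner_add_left, hermInner_add_left,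
        hermInner_add_left, hermInner_smul_left, hermInner_smul_left, hermInner_smul_left,
        hermInner_smul_left, hΦdef]
    · have h0 : f x = 0 := hf0 x (hnotS x hx)
      simp [hΦdef, h0, hermInner_zero_right]
  -- continuity of matrix-vector products
  have hγC : ∀ (Mat : Matrix (Fin 4) (Fin 4) ℂ), Continuous (fun x => Mat *ᵥ f x) := by
    intro Mat
    refine continuous_pi fun j => ?_
    simp only [Matrix.mulVec, dotProduct]
    exact continuous_finset_sum _ fun k _ =>
      continuous_const.mul ((continuous_apply k).comp hfC)
  have hA0 : ContinuousOn (A M l rfun) (Set.Ioo xp 0) := hAsm.continuousOn.mono hSIio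
  have hB0 : ContinuousOn (B M l rfun) (Set.Ioo xp 0) := hBsm.continuousOn.mono hSIio
  have hpdc : ContinuousOn (deriv ϕ) (Set.Ioo xp 0) := hpdsm.continuousOn
  have hpd2c : ContinuousOn (deriv (deriv ϕ)) (Set.Ioo xp 0) := hpd2sm.continuousOn
  have hVmulC : ContinuousOn (fun x => Vpot M l rfun m h x *ᵥ f x) (Set.Ioo xp 0) := by
    have hdec : (fun x => Vpot M l rfun m h x *ᵥ f x) = fun x =>
        (((A M l rfun x)^2 + h^2 * m^2 * (B M l rfun x)^2 : ℝ) : ℂ) • f x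
          - (Complex.I * ((h * deriv (A M l rfun) x : ℝ) : ℂ)) • (γ12 *ᵥ f x)
          + (Complex.I * ((h^2 * m * deriv (B M l rfun) x : ℝ) : ℂ)) • (γ1 *ᵥ f x) :=
      funext fun x => Vpot_mulVec M l rfun m h x (f x)
    rw [hdec]
    refine ContinuousOn.add (ContinuousOn.sub (ContinuousOn.fun_smul ?_ hfC.continuousOn)
      (ContinuousOn.fun_smul ?_ (hγC γ12).continuousOn))
      (ContinuousOn.fun_smul ?_ (hγC γ1).continuousOn)
    · exact Complex.continuous_ofReal.comp_continuousOn
        ((hA0.pow 2).add (continuousOn_const.mul (hB0.pow 2)))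
    · exact continuousOn_const.mul (Complex.continuous_ofReal.comp_continuousOn
        (continuousOn_const.mul (hAdC.mono hSIio)))
    · exact continuousOn_const.mul (Complex.continuous_ofReal.comp_continuousOn
        (continuousOn_const.mul (hBdC.mono hSIio)))
  -- integrability of Φ
  have hΦ0 : ∀ x, x ∉ tsupport f → Φ x = 0 := by
    intro x hx
    simp [hΦdef, hf0 x hx, hermInner_zero_right]
  have hΦcontOn : ContinuousOn Φ (Set.Ioo xp 0) := by
    rw [hΦdef]
    have c_ff : Continuous (fun x => hermInner (f x) (f x)) := continuous_hermInner hfC hfC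
    have c_f1f : Continuous (fun x => hermInner (deriv f x) (f x)) :=
      continuous_hermInner hf1C hfC
    have c_f2f : Continuous (fun x => hermInner (deriv (deriv f) x) (f x)) :=
      continuous_hermInner hf2c hfC
    have s1 : ContinuousOn
        (fun x => ((-(h^2) * ((deriv ϕ x / h)^2 - deriv (deriv ϕ) x / h) : ℝ) : ℂ))
        (Set.Ioo xp 0) :=
      Complex.continuous_ofReal.comp_continuousOn
        (continuousOn_const.mul (((hpdc.div_const h).pow 2).sub (hpd2c.div_const h)))
    have s2 : ContinuousOn
        (fun x => ((-(h^2) * (2 * (-(deriv ϕ x) / h)) : ℝ) : ℂ)) (Set.Ioo xp 0) :=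
      Complex.continuous_ofReal.comp_continuousOn
        (continuousOn_const.mul (continuousOn_const.mul (hpdc.neg.div_const h)))
    exact ((((s1.mul c_ff.continuousOn).add (s2.mul c_f1f.continuousOn)).add
      (continuousOn_const.mul c_f2f.continuousOn)).add
      (continuousOn_hermInner hVmulC hfC.continuousOn)).sub
      (continuousOn_const.mul c_ff.continuousOn)
  have hΦint : Integrable Φ := integrable_glue hSopen hfc hKcl hKS hΦcontOn hΦ0
  -- integrability of the pieces
  have hΛ1C : Continuous (fun x => hermInner ((-(h^2:ℂ)) • deriv (deriv f) x) (f x)) :=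
    continuous_hermInner (hf2c.fun_const_smul _) hfC
  have hΛ1int : Integrable (fun x => hermInner ((-(h^2:ℂ)) • deriv (deriv f) x) (f x)) :=
    integrable_glue hSopen hfc hKcl hKS hΛ1C.continuousOn
      (fun x hx => by rw [hf0 x hx, hermInner_zero_right])
  have hW1int : Integrable
      (fun x => (hermInner ((-(h^2:ℂ)) • deriv (deriv f) x) (f x)).re) :=
    integrable_glue hSopen hfc hKcl hKS (Complex.continuous_re.comp hΛ1C).continuousOn
      (fun x hx => by rw [hf0 x hx, hermInner_zero_right]; rfl)
  have hW2int : Integrable (fun x =>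
      ((A M l rfun x)^2 + h^2 * m^2 * (B M l rfun x)^2 - (deriv ϕ x)^2 - E) * nsq (f x)
        + h^2 * m * deriv (B M l rfun) x
            * (hermInner (Complex.I • (γ1 *ᵥ f x)) (f x)).re) := by
    refine integrable_glue hSopen hfc hKcl hKS ?_ ?_
    · refine ContinuousOn.add (ContinuousOn.mul ?_ hnsqC.continuousOn)
        (ContinuousOn.mul (continuousOn_const.mul (hBdC.mono hSIio))
          (Complex.continuous_re.comp
            (continuous_hermInner ((hγC γ1).fun_const_smul _) hfC)).continuousOn)
      exact (((hA0.pow 2).add (continuousOn_const.mul (hB0.pow 2))).sub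
        (hpdc.pow 2)).sub continuousOn_const
    · intro x hx
      simp [hf0 x hx, hermInner_zero_right, nsq]
  have hW3int : Integrable (fun x => deriv (A M l rfun) x *
      (f x 1 * (starRingEnd ℂ) (f x 0) + f x 3 * (starRingEnd ℂ) (f x 2)).im) := by
    refine integrable_glue hSopen hfc hKcl hKS ?_ ?_
    · refine ContinuousOn.mul (hAdC.mono hSIio)
        (Complex.continuous_im.comp ?_).continuousOn
      exact (((continuous_apply 1).comp hfC).mul
          (Complex.continuous_conj.comp ((continuous_apply 0).comp hfC))).add
        (((continuous_apply 3).comp hfC).mul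
          (Complex.continuous_conj.comp ((continuous_apply 2).comp hfC)))
    · intro x hx
      simp [hf0 x hx]
  have hGdint : Integrable (deriv G) :=
    integrable_glue hSopen hfc hKcl hKS
      (hGsm.continuousOn_deriv_of_isOpen hSopen (by simp)) hGd0
  -- pointwise real identity
  have hre : ∀ x, (Φ x).re
      = (hermInner ((-(h^2:ℂ)) • deriv (deriv f) x) (f x)).re
        + (((A M l rfun x)^2 + h^2 * m^2 * (B M l rfun x)^2 - (deriv ϕ x)^2 - E) * nsq (f x)
            + h^2 * m * deriv (B M l rfun) x
                * (hermInner (Complex.I • (γ1 *ᵥ f x)) (f x)).re)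
        + (-(2*h)) * (deriv (A M l rfun) x *
            (f x 1 * (starRingEnd ℂ) (f x 0) + f x 3 * (starRingEnd ℂ) (f x 2)).im)
        + h * deriv G x := by
    intro x
    by_cases hx : x ∈ Set.Ioo xp 0
    · have hGx : deriv G x = deriv (deriv ϕ) x * nsq (f x)
          + deriv ϕ x * (2 * (hermInner (deriv f x) (f x)).re) := (hGat x hx).deriv
      rw [hGx, hermInner_smul_left]
      simp only [hΦdef]
      rw [Complex.sub_re, Complex.add_re, Complex.add_re, Complex.add_re,
        Vherm M l rfun m h x (f x), hermInner_self]
      simp only [Complex.mul_re, Complex.ofReal_re, Complex.ofReal_im, Complex.neg_re,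
        Complex.neg_im, ← Complex.ofReal_pow, zero_mul, mul_zero, sub_zero]
      field_simp
      ring
    · have h0 := hf0 x (hnotS x hx)
      rw [hGd0 x (hnotS x hx), hermInner_smul_left]
      simp [hΦdef, h0, hermInner_zero_right, nsq]
  -- final assembly
  have e1 : (∫ x in Set.Ioo xp 0,
      hermInner
        (((Real.exp (ϕ x / h) : ℝ) : ℂ) •
          ((-(h^2 : ℂ)) • deriv (deriv (fun t => ((Real.exp (-ϕ t / h) : ℝ) : ℂ) • f t)) x
            + Vpot M l rfun m h x *ᵥ (((Real.exp (-ϕ x / h) : ℝ) : ℂ) • f x)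
            - ((E : ℝ) : ℂ) • (((Real.exp (-ϕ x / h) : ℝ) : ℂ) • f x)))
        (f x)) = ∫ x in Set.Ioo xp 0, Φ x :=
    integral_congr_ae (Filter.Eventually.of_forall hLCΦ)
  rw [e1]
  have e2 : (∫ x in Set.Ioo xp 0, Φ x).re = ∫ x in Set.Ioo xp 0, (Φ x).re := by
    have := integral_re (μ := volume.restrict (Set.Ioo xp 0)) hΦint.integrableOn
    simpa using this.symm
  rw [e2]
  have e3 : ∫ x in Set.Ioo xp 0, (Φ x).re
      = ∫ x in Set.Ioo xp 0,
          ((hermInner ((-(h^2:ℂ)) • deriv (deriv f) x) (f x)).re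
            + (((A M l rfun x)^2 + h^2 * m^2 * (B M l rfun x)^2 - (deriv ϕ x)^2 - E)
                  * nsq (f x)
                + h^2 * m * deriv (B M l rfun) x
                    * (hermInner (Complex.I • (γ1 *ᵥ f x)) (f x)).re)
            + (-(2*h)) * (deriv (A M l rfun) x *
                (f x 1 * (starRingEnd ℂ) (f x 0) + f x 3 * (starRingEnd ℂ) (f x 2)).im)
            + h * deriv G x) :=
    integral_congr_ae (Filter.Eventually.of_forall hre)
  rw [e3]
  have i12 : Integrable (fun x => (hermInner ((-(h^2:ℂ)) • deriv (deriv f) x) (f x)).re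
      + (((A M l rfun x)^2 + h^2 * m^2 * (B M l rfun x)^2 - (deriv ϕ x)^2 - E) * nsq (f x)
          + h^2 * m * deriv (B M l rfun) x
              * (hermInner (Complex.I • (γ1 *ᵥ f x)) (f x)).re)) := hW1int.add hW2int
  have i3 : Integrable (fun x => (-(2*h)) * (deriv (A M l rfun) x *
      (f x 1 * (starRingEnd ℂ) (f x 0) + f x 3 * (starRingEnd ℂ) (f x 2)).im)) :=
    hW3int.const_mul _
  have i123 : Integrable (fun x => (hermInner ((-(h^2:ℂ)) • deriv (deriv f) x) (f x)).re
      + (((A M l rfun x)^2 + h^2 * m^2 * (B M l rfun x)^2 - (deriv ϕ x)^2 - E) * nsq (f x)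
          + h^2 * m * deriv (B M l rfun) x
              * (hermInner (Complex.I • (γ1 *ᵥ f x)) (f x)).re)
      + (-(2*h)) * (deriv (A M l rfun) x *
        (f x 1 * (starRingEnd ℂ) (f x 0) + f x 3 * (starRingEnd ℂ) (f x 2)).im)) :=
    i12.add i3
  have i4 : Integrable (fun x => h * deriv G x) := hGdint.const_mul _
  rw [integral_add i123.integrableOn i4.integrableOn,
    integral_add i12.integrableOn i3.integrableOn,
    integral_add hW1int.integrableOn hW2int.integrableOn,
    integral_const_mul, integral_const_mul]
  have e4 : ∫ x in Set.Ioo xp 0, deriv G x = 0 := by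
    rw [← integral_Ioc_eq_integral_Ioo, ← intervalIntegral.integral_of_le hxp.le,
      intervalIntegral.integral_deriv_eq_sub (fun y _ => hGdiff y)
        (hGdC.intervalIntegrable _ _)]
    have h00 : f 0 = 0 := hf0 0 (hnotS 0 (by simp))
    have hxx : f xp = 0 := hf0 xp (hnotS xp (by simp))
    simp [hGdef, h00, hxx, nsq]
  rw [e4]
  have e5 : (∫ x in Set.Ioo xp 0, hermInner ((-(h^2:ℂ)) • deriv (deriv f) x) (f x)).re
      = ∫ x in Set.Ioo xp 0, (hermInner ((-(h^2:ℂ)) • deriv (deriv f) x) (f x)).re := by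
    have := integral_re (μ := volume.restrict (Set.Ioo xp 0)) hΛ1int.integrableOn
    simpa using this.symm
  rw [e5]
  ring
end
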